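/- Under the same assumptions (V ∈ C²_b, ω^{3/2−σ}χ ∈ L², σ ∈ [1/2,1]), the nonlinearity 𝒩 : X^σ → X^σ is continuous: if u_ℓ → u in X^σ, then 𝒩(u_ℓ) → 𝒩(u) in X^σ. -/

import Mathlib

open MeasureTheory

noncomputable section

/-- The phase space X = ℝ^{dn} × ℝ^{dn} × {fields}: momenta (p_1,…,p_n), positions
(flattened into ℝ^{n×d}) and the field α : ℝ^d → ℂ. -/
abbrev PhaseSpace (d n : ℕ) :=
  (Fin n → EuclideanSpace ℝ (Fin d)) × EuclideanSpace ℝ (Fin n × Fin d) ×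
    (EuclideanSpace ℝ (Fin d) → ℂ)

/-- The dispersion relation ω(k) = √(|k|² + m²). -/
def omega (d : ℕ) (m : ℝ) (k : EuclideanSpace ℝ (Fin d)) : ℝ :=
  Real.sqrt (‖k‖ ^ 2 + m ^ 2)

/-- The j-th position block q_j ∈ ℝ^d of q ∈ ℝ^{n×d}. -/
def qblock (d n : ℕ) (q : EuclideanSpace ℝ (Fin n × Fin d)) (j : Fin n) :
    EuclideanSpace ℝ (Fin d) :=
  WithLp.toLp 2 (fun i => q (j, i))

/-- The phase 2π k·x. -/
def phase (d : ℕ) (k x : EuclideanSpace ℝ (Fin d)) : ℝ :=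
  2 * Real.pi * ∑ i, k i * x i

/-- The i-th component of
∇_{q_j} I_j(q,α) = ∫ 2πi k (χ(k)/√ω(k)) [α(k) e^{2πi k·q_j} − conj(α(k)) e^{−2πi k·q_j}] dk. -/
def gradI (d : ℕ) (m : ℝ) (χ : EuclideanSpace ℝ (Fin d) → ℝ)
    (qj : EuclideanSpace ℝ (Fin d)) (α : EuclideanSpace ℝ (Fin d) → ℂ) (i : Fin d) : ℂ :=
  ∫ k : EuclideanSpace ℝ (Fin d),
    2 * (Real.pi : ℂ) * Complex.I * ((k i : ℝ) : ℂ) *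
      ((χ k / Real.sqrt (omega d m k) : ℝ) : ℂ) *
      (α k * Complex.exp (((phase d k qj : ℝ) : ℂ) * Complex.I) -
        (starRingEnd ℂ) (α k) * Complex.exp (-(((phase d k qj : ℝ) : ℂ) * Complex.I)))

/-- The nonlinearity 𝒩 of the particle-field equation:
(𝒩(u))_{p_j} = −∇_{q_j}V(q) − ∇_{q_j}I_j(q,α), (𝒩(u))_{q_j} = ∇f_j(p_j),
(𝒩(u))_α(k) = −i Σ_j (χ(k)/√ω(k)) e^{−2πik·q_j}. -/
def NL (d n : ℕ) (m : ℝ) (χ : EuclideanSpace ℝ (Fin d) → ℝ)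
    (V : EuclideanSpace ℝ (Fin n × Fin d) → ℝ)
    (f : Fin n → EuclideanSpace ℝ (Fin d) → ℝ)
    (u : PhaseSpace d n) : PhaseSpace d n :=
  (fun j => (WithLp.toLp 2 (fun i => -(gradient V u.2.1 (j, i)) -
      (gradI d m χ (qblock d n u.2.1 j) u.2.2 i).re) : EuclideanSpace ℝ (Fin d)),
    (WithLp.toLp 2 (fun ji : Fin n × Fin d => gradient (f ji.1) (u.1 ji.1) ji.2) :
      EuclideanSpace ℝ (Fin n × Fin d)),
    fun k => -Complex.I * ∑ j : Fin n, ((χ k / Real.sqrt (omega d m k) : ℝ) : ℂ) *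
      Complex.exp (-(((phase d k (qblock d n u.2.1 j) : ℝ) : ℂ) * Complex.I)))

/-- The X^σ norm: ‖(p,q,α)‖² = Σ|p_j|² + Σ|q_j|² + ‖ω^σ α‖²_{L²}. -/
def normX (d n : ℕ) (σ m : ℝ) (u : PhaseSpace d n) : ℝ :=
  Real.sqrt ((∑ j, ‖u.1 j‖ ^ 2) + ‖u.2.1‖ ^ 2 +
    ((eLpNorm (fun k => ((omega d m k ^ σ : ℝ) : ℂ) * u.2.2 k) 2 volume).toReal) ^ 2)

/-- The free field flow Φ^f_t(p,q,α) = (p, q, e^{−itω}α). -/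
def freeFlow (d n : ℕ) (m : ℝ) (t : ℝ) (u : PhaseSpace d n) : PhaseSpace d n :=
  (u.1, u.2.1, fun k => Complex.exp (-(Complex.I * (t : ℂ) * ((omega d m k : ℝ) : ℂ))) * u.2.2 k)

/-- The non-autonomous vector field v(t,u) = Φ^f_{−t} ∘ 𝒩 ∘ Φ^f_t(u). -/
def vfield (d n : ℕ) (m : ℝ) (χ : EuclideanSpace ℝ (Fin d) → ℝ)
    (V : EuclideanSpace ℝ (Fin n × Fin d) → ℝ)
    (f : Fin n → EuclideanSpace ℝ (Fin d) → ℝ)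
    (t : ℝ) (u : PhaseSpace d n) : PhaseSpace d n :=
  freeFlow d n m (-t) (NL d n m χ V f (freeFlow d n m t u))

end

/-!
Each component of `𝒩` is treated separately. The position component `∇f_j(p_j)` and the
potential term `∇V(q)` are continuous because `f_j` and `V` are `C¹`. The coupling term
`∇_{q_j} I_j(q, α)` pairs `ω^σ α` against `ω^{1/2-σ} χ ∈ L²` (using `|k_i| ≤ ω(k)`), so by
Cauchy–Schwarz it is Lipschitz in `α` for the `X^σ` norm, and it is continuous in `q` by dominated
convergence. The weighted field component `ω^σ 𝒩(u)_α` is bounded by `n ω^{σ-1/2} |χ|`, which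
lies in `L²` because `σ - 1/2 ≤ 3/2 - σ` for `σ ≤ 1` and `ω ≥ m > 0`; it converges in `L²` by
dominated convergence.
-/

open MeasureTheory Filter Topology ENNReal

section Lebesgue

variable {α E F G : Type*} [MeasurableSpace α] {μ : Measure α}
  [NormedAddCommGroup E] [NormedAddCommGroup F] [NormedAddCommGroup G]

section Holder

variable {p q : ℝ≥0∞} [HolderTriple p q 1] {g : α → G} {F₁ : α → E} {F₂ : α → F}

theorem integrable_of_norm_le_mul (hg : AEStronglyMeasurable g μ) (h₁ : MemLp F₁ p μ)
    (h₂ : MemLp F₂ q μ) (h : ∀ᵐ x ∂μ, ‖g x‖ ≤ ‖F₁ x‖ * ‖F₂ x‖) : Integrable g μ :=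
  (h₁.norm.integrable_mul h₂.norm).mono' hg h

theorem norm_integral_le_of_norm_le_mul [NormedSpace ℝ G] (h₁ : MemLp F₁ p μ)
    (h₂ : MemLp F₂ q μ) (h : ∀ᵐ x ∂μ, ‖g x‖ ≤ ‖F₁ x‖ * ‖F₂ x‖) :
    ‖∫ x, g x ∂μ‖ ≤ (eLpNorm F₁ p μ).toReal * (eLpNorm F₂ q μ).toReal := by
  have hHolder : eLpNorm (fun x => ‖F₁ x‖ * ‖F₂ x‖) 1 μ ≤ eLpNorm F₁ p μ * eLpNorm F₂ q μ := by
    simpa using eLpNorm_le_eLpNorm_mul_eLpNorm'_of_norm h₁.1 h₂.1 (fun a b => ‖a‖ * ‖b‖) 1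
      (.of_forall fun x => by simp)
  have hint : Integrable (fun x => ‖F₁ x‖ * ‖F₂ x‖) μ := h₁.norm.integrable_mul h₂.norm
  calc ‖∫ x, g x ∂μ‖ ≤ ∫ x, ‖F₁ x‖ * ‖F₂ x‖ ∂μ := norm_integral_le_of_norm_le hint h
    _ = (eLpNorm (fun x => ‖F₁ x‖ * ‖F₂ x‖) 1 μ).toReal := by
      rw [eLpNorm_one_eq_lintegral_enorm, ← integral_norm_eq_lintegral_enorm hint.1]
      simp
    _ ≤ (eLpNorm F₁ p μ).toReal * (eLpNorm F₂ q μ).toReal := by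
      rw [← ENNReal.toReal_mul]
      exact ENNReal.toReal_mono (by finiteness [h₁.2, h₂.2]) hHolder

end Holder

theorem tendsto_eLpNorm_sub_of_dominated {p : ℝ≥0∞} (hp0 : p ≠ 0) (hp : p ≠ ∞)
    {F : ℕ → α → E} {f : α → E}
    {bound : α → ℝ} (hF : ∀ n, AEStronglyMeasurable (F n) μ) (hbound : MemLp bound p μ)
    (h_bound : ∀ n, ∀ᵐ x ∂μ, ‖F n x‖ ≤ bound x)
    (h_lim : ∀ᵐ x ∂μ, Tendsto (fun n => F n x) atTop (𝓝 (f x))) :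
    Tendsto (fun n => eLpNorm (fun x => F n x - f x) p μ) atTop (𝓝 0) := by
  have hr : 0 < p.toReal := ENNReal.toReal_pos hp0 hp
  have hf : AEStronglyMeasurable f μ := aestronglyMeasurable_of_tendsto_ae _ hF h_lim
  have h_sub_bound : ∀ n, ∀ᵐ x ∂μ, ‖F n x - f x‖ₑ ^ p.toReal ≤ ‖2 * bound x‖ₑ ^ p.toReal := by
    intro n
    filter_upwards [ae_all_iff.2 h_bound, h_lim] with x hFx hfx
    have hfx_le : ‖f x‖ ≤ bound x := le_of_tendsto' hfx.norm hFx
    gcongr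
    rw [enorm_le_iff_norm_le, Real.norm_eq_abs]
    calc ‖F n x - f x‖ ≤ ‖F n x‖ + ‖f x‖ := norm_sub_le _ _
      _ ≤ |2 * bound x| := by linarith [hFx n, le_abs_self (2 * bound x)]
  have h_sub_lim : ∀ᵐ x ∂μ, Tendsto (fun n => ‖F n x - f x‖ₑ ^ p.toReal) atTop (𝓝 0) :=
    h_lim.mono fun x hx => by
      simpa [Function.comp_def, ENNReal.zero_rpow_of_pos hr] using
        (((ENNReal.continuous_rpow_const (y := p.toReal)).comp continuous_enorm).tendsto 0).comp
          (tendsto_sub_nhds_zero_iff.2 hx)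
  have h_int : Tendsto (fun n => ∫⁻ x, ‖F n x - f x‖ₑ ^ p.toReal ∂μ) atTop (𝓝 0) := by
    simpa using tendsto_lintegral_of_dominated_convergence' _
      (fun n => ((hF n).sub hf).enorm.pow_const _) h_sub_bound
      (lintegral_rpow_enorm_lt_top_of_eLpNorm_lt_top hp0 hp
        (hbound.const_mul 2).eLpNorm_lt_top).ne h_sub_lim
  simp_rw [eLpNorm_eq_lintegral_rpow_enorm_toReal hp0 hp]
  simpa [Function.comp_def, ENNReal.zero_rpow_of_pos (inv_pos.2 hr)] using
    ((ENNReal.continuous_rpow_const (y := p.toReal⁻¹)).tendsto 0).comp h_int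

end Lebesgue

section Omega

variable {d : ℕ} {m : ℝ}

theorem omega_pos (hm : 0 < m) (k : EuclideanSpace ℝ (Fin d)) : 0 < omega d m k :=
  Real.sqrt_pos.2 (add_pos_of_nonneg_of_pos (sq_nonneg _) (pow_pos hm 2))

theorem le_omega (k : EuclideanSpace ℝ (Fin d)) : m ≤ omega d m k :=
  Real.le_sqrt_of_sq_le (by nlinarith [sq_nonneg ‖k‖])

theorem norm_le_omega (k : EuclideanSpace ℝ (Fin d)) : ‖k‖ ≤ omega d m k :=
  Real.le_sqrt_of_sq_le (by nlinarith [sq_nonneg m])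

theorem abs_apply_le_omega (k : EuclideanSpace ℝ (Fin d)) (i : Fin d) : |k i| ≤ omega d m k :=
  (PiLp.norm_apply_le k i).trans (norm_le_omega k)

@[fun_prop]
theorem continuous_omega : Continuous (omega d m) := by
  unfold omega
  fun_prop

theorem omega_rpow_le (hm : 0 < m) {s t : ℝ} (hst : s ≤ t) (k : EuclideanSpace ℝ (Fin d)) :
    omega d m k ^ s ≤ m ^ (s - t) * omega d m k ^ t := by
  have hω := omega_pos hm k
  calc omega d m k ^ s = omega d m k ^ (s - t) * omega d m k ^ t := by
        rw [← Real.rpow_add hω, sub_add_cancel]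
    _ ≤ m ^ (s - t) * omega d m k ^ t :=
        mul_le_mul_of_nonneg_right
          (Real.rpow_le_rpow_of_nonpos hm (le_omega k) (sub_nonpos.2 hst))
          (Real.rpow_nonneg hω.le t)

theorem aestronglyMeasurable_omega_rpow_smul_iff {F : Type*} [NormedAddCommGroup F]
    [NormedSpace ℝ F] {μ : Measure (EuclideanSpace ℝ (Fin d))} (hm : 0 < m) (t : ℝ)
    {g : EuclideanSpace ℝ (Fin d) → F} :
    AEStronglyMeasurable (fun k => omega d m k ^ t • g k) μ ↔ AEStronglyMeasurable g μ :=
  aestronglyMeasurable_smul_iff₀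
    (continuous_omega.rpow_const fun k => .inl (omega_pos hm k).ne').aestronglyMeasurable
    (.of_forall fun k => (Real.rpow_pos_of_pos (omega_pos hm k) t).ne')

theorem aestronglyMeasurable_of_omega_rpow_mul_complex {μ : Measure (EuclideanSpace ℝ (Fin d))}
    (hm : 0 < m) {t : ℝ} {α : EuclideanSpace ℝ (Fin d) → ℂ}
    (h : AEStronglyMeasurable (fun k => ((omega d m k ^ t : ℝ) : ℂ) * α k) μ) :
    AEStronglyMeasurable α μ :=
  (aestronglyMeasurable_omega_rpow_smul_iff hm t).1 (by simpa only [Complex.real_smul] using h)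

theorem aestronglyMeasurable_ofReal_div_sqrt_omega {μ : Measure (EuclideanSpace ℝ (Fin d))}
    {χ : EuclideanSpace ℝ (Fin d) → ℝ} (hχ : AEStronglyMeasurable χ μ) :
    AEStronglyMeasurable (fun k => ((χ k / √(omega d m k) : ℝ) : ℂ)) μ :=
  Complex.continuous_ofReal.comp_aestronglyMeasurable
    (hχ.div₀ continuous_omega.sqrt.aestronglyMeasurable)

theorem memLp_omega_rpow_mul_of_le {p : ℝ≥0∞} {μ : Measure (EuclideanSpace ℝ (Fin d))}
    (hm : 0 < m) {s t : ℝ} (hst : s ≤ t) {χ : EuclideanSpace ℝ (Fin d) → ℝ}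
    (hχ : MemLp (fun k => omega d m k ^ t * χ k) p μ) :
    MemLp (fun k => omega d m k ^ s * χ k) p μ := by
  have hχ_meas : AEStronglyMeasurable χ μ :=
    (aestronglyMeasurable_omega_rpow_smul_iff hm t).1 hχ.1
  refine hχ.of_le_mul (c := m ^ (s - t))
    ((aestronglyMeasurable_omega_rpow_smul_iff hm s).2 hχ_meas) (.of_forall fun k => ?_)
  have hω := omega_pos hm k
  simp only [norm_mul, Real.norm_eq_abs, abs_of_pos (Real.rpow_pos_of_pos hω _), ← mul_assoc]
  gcongr
  exact omega_rpow_le hm hst k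

end Omega

section Continuity

variable {X : Type*} [TopologicalSpace X] {d n : ℕ}

@[fun_prop]
theorem Continuous.phase {k x : X → EuclideanSpace ℝ (Fin d)} (hk : Continuous k)
    (hx : Continuous x) : Continuous fun y => phase d (k y) (x y) := by
  unfold _root_.phase
  fun_prop

@[fun_prop]
theorem Continuous.qblock {q : X → EuclideanSpace ℝ (Fin n × Fin d)} (hq : Continuous q)
    (j : Fin n) : Continuous fun y => qblock d n (q y) j := by
  unfold _root_.qblock
  fun_prop

end Continuity

section GradI

open Real

variable {d : ℕ} {m σ : ℝ} {χ : EuclideanSpace ℝ (Fin d) → ℝ}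

noncomputable def gradIIntegrand (d : ℕ) (m : ℝ) (χ : EuclideanSpace ℝ (Fin d) → ℝ)
    (qj : EuclideanSpace ℝ (Fin d)) (α : EuclideanSpace ℝ (Fin d) → ℂ) (i : Fin d)
    (k : EuclideanSpace ℝ (Fin d)) : ℂ :=
  2 * (π : ℂ) * Complex.I * ((k i : ℝ) : ℂ) * ((χ k / √(omega d m k) : ℝ) : ℂ) *
    (α k * Complex.exp (((phase d k qj : ℝ) : ℂ) * Complex.I) -
      (starRingEnd ℂ) (α k) * Complex.exp (-(((phase d k qj : ℝ) : ℂ) * Complex.I)))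

theorem gradI_eq_integral (qj : EuclideanSpace ℝ (Fin d)) (α : EuclideanSpace ℝ (Fin d) → ℂ)
    (i : Fin d) : gradI d m χ qj α i = ∫ k, gradIIntegrand d m χ qj α i k := rfl

theorem gradIIntegrand_sub (qj : EuclideanSpace ℝ (Fin d)) (α β : EuclideanSpace ℝ (Fin d) → ℂ)
    (i : Fin d) (k : EuclideanSpace ℝ (Fin d)) :
    gradIIntegrand d m χ qj (α - β) i k =
      gradIIntegrand d m χ qj α i k - gradIIntegrand d m χ qj β i k := by
  simp only [gradIIntegrand, Pi.sub_apply, map_sub]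
  ring

theorem continuous_gradIIntegrand_left (α : EuclideanSpace ℝ (Fin d) → ℂ) (i : Fin d)
    (k : EuclideanSpace ℝ (Fin d)) :
    Continuous fun qj => gradIIntegrand d m χ qj α i k := by
  unfold gradIIntegrand
  fun_prop

theorem norm_gradIIntegrand_le (hm : 0 < m) (qj : EuclideanSpace ℝ (Fin d))
    (α : EuclideanSpace ℝ (Fin d) → ℂ) (i : Fin d) (k : EuclideanSpace ℝ (Fin d)) :
    ‖gradIIntegrand d m χ qj α i k‖ ≤
      ‖4 * π * (omega d m k ^ (1 / 2 - σ) * χ k)‖ *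
        ‖((omega d m k ^ σ : ℝ) : ℂ) * α k‖ := by
  rw [gradIIntegrand]
  set w := omega d m k
  have hw : 0 < w := omega_pos hm k
  have hsqrt : 0 < √w := Real.sqrt_pos.2 hw
  have hki : |k i| / √w ≤ √w := by
    rw [div_le_iff₀ hsqrt, Real.mul_self_sqrt hw.le]
    exact abs_apply_le_omega k i
  have hbracket : ‖α k * Complex.exp (((phase d k qj : ℝ) : ℂ) * Complex.I) -
      (starRingEnd ℂ) (α k) * Complex.exp (-(((phase d k qj : ℝ) : ℂ) * Complex.I))‖ ≤
      2 * ‖α k‖ := by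
    refine (norm_sub_le _ _).trans_eq ?_
    rw [← neg_mul, ← Complex.ofReal_neg, norm_mul, norm_mul, Complex.norm_exp_ofReal_mul_I,
      Complex.norm_exp_ofReal_mul_I, RCLike.norm_conj]
    ring
  have hrhs : ‖4 * π * (w ^ (1 / 2 - σ) * χ k)‖ * ‖((w ^ σ : ℝ) : ℂ) * α k‖ =
      4 * π * √w * |χ k| * ‖α k‖ := by
    simp only [norm_mul, Complex.norm_real, Real.norm_eq_abs, abs_of_pos Real.pi_pos,
      abs_of_pos (four_pos : (0 : ℝ) < 4), abs_of_pos (Real.rpow_pos_of_pos hw σ),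
      abs_of_pos (Real.rpow_pos_of_pos hw (1 / 2 - σ)), Real.sqrt_eq_rpow]
    calc 4 * π * (w ^ (1 / 2 - σ) * |χ k|) * (w ^ σ * ‖α k‖)
        = 4 * π * (w ^ (1 / 2 - σ) * w ^ σ) * |χ k| * ‖α k‖ := by ring
      _ = 4 * π * w ^ (1 / 2 : ℝ) * |χ k| * ‖α k‖ := by
        rw [← Real.rpow_add hw, sub_add_cancel]
  rw [hrhs]
  simp only [norm_mul, Complex.norm_real, Complex.norm_ofNat, Complex.norm_I, Real.norm_eq_abs,
    abs_div, abs_of_pos hsqrt, abs_of_pos Real.pi_pos, mul_one]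
  calc 2 * π * |k i| * (|χ k| / √w) * ‖_‖
      ≤ 2 * π * |k i| * (|χ k| / √w) * (2 * ‖α k‖) := by gcongr
    _ = 4 * π * (|k i| / √w) * |χ k| * ‖α k‖ := by ring
    _ ≤ 4 * π * √w * |χ k| * ‖α k‖ := by gcongr

theorem aestronglyMeasurable_gradIIntegrand {μ : Measure (EuclideanSpace ℝ (Fin d))}
    (hχ : AEStronglyMeasurable χ μ) {α : EuclideanSpace ℝ (Fin d) → ℂ}
    (hα : AEStronglyMeasurable α μ) (qj : EuclideanSpace ℝ (Fin d)) (i : Fin d) :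
    AEStronglyMeasurable (gradIIntegrand d m χ qj α i) μ := by
  have := aestronglyMeasurable_ofReal_div_sqrt_omega (m := m) hχ
  have : Continuous fun k : EuclideanSpace ℝ (Fin d) => ((k i : ℝ) : ℂ) := by fun_prop
  unfold gradIIntegrand
  fun_prop

theorem integrable_gradIIntegrand {α : EuclideanSpace ℝ (Fin d) → ℂ} (hm : 0 < m)
    (hχ : MemLp (fun k => omega d m k ^ (1 / 2 - σ) * χ k) 2 volume)
    (hα : MemLp (fun k => ((omega d m k ^ σ : ℝ) : ℂ) * α k) 2 volume)
    (qj : EuclideanSpace ℝ (Fin d)) (i : Fin d) :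
    Integrable (gradIIntegrand d m χ qj α i) volume :=
  integrable_of_norm_le_mul
    (aestronglyMeasurable_gradIIntegrand
      ((aestronglyMeasurable_omega_rpow_smul_iff hm _).1 hχ.1)
      (aestronglyMeasurable_of_omega_rpow_mul_complex hm hα.1) qj i)
    (hχ.const_mul (4 * π)) hα (.of_forall (norm_gradIIntegrand_le hm qj α i))

theorem norm_gradI_sub_le {α β : EuclideanSpace ℝ (Fin d) → ℂ} (hm : 0 < m)
    (hχ : MemLp (fun k => omega d m k ^ (1 / 2 - σ) * χ k) 2 volume)
    (hα : MemLp (fun k => ((omega d m k ^ σ : ℝ) : ℂ) * α k) 2 volume)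
    (hβ : MemLp (fun k => ((omega d m k ^ σ : ℝ) : ℂ) * β k) 2 volume)
    (qj : EuclideanSpace ℝ (Fin d)) (i : Fin d) :
    ‖gradI d m χ qj α i - gradI d m χ qj β i‖ ≤
      (eLpNorm (fun k => 4 * π * (omega d m k ^ (1 / 2 - σ) * χ k)) 2 volume).toReal *
        (eLpNorm (fun k => ((omega d m k ^ σ : ℝ) : ℂ) * (α k - β k)) 2 volume).toReal := by
  have hαβ : MemLp (fun k => ((omega d m k ^ σ : ℝ) : ℂ) * (α - β) k) 2 volume := by
    convert hα.sub hβ using 1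
    funext k
    simp only [Pi.sub_apply, mul_sub]
  rw [gradI_eq_integral, gradI_eq_integral, ← integral_sub
    (integrable_gradIIntegrand hm hχ hα qj i) (integrable_gradIIntegrand hm hχ hβ qj i)]
  simp_rw [← gradIIntegrand_sub]
  exact norm_integral_le_of_norm_le_mul (hχ.const_mul _) hαβ
    (.of_forall (norm_gradIIntegrand_le hm qj (α - β) i))

theorem continuous_gradI_left {α : EuclideanSpace ℝ (Fin d) → ℂ} (hm : 0 < m)
    (hχ : MemLp (fun k => omega d m k ^ (1 / 2 - σ) * χ k) 2 volume)
    (hα : MemLp (fun k => ((omega d m k ^ σ : ℝ) : ℂ) * α k) 2 volume) (i : Fin d) :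
    Continuous fun qj => gradI d m χ qj α i :=
  continuous_of_dominated
    (fun qj => (integrable_gradIIntegrand hm hχ hα qj i).1)
    (fun qj => .of_forall (norm_gradIIntegrand_le hm qj α i))
    ((hχ.const_mul (4 * π)).norm.integrable_mul hα.norm)
    (.of_forall (continuous_gradIIntegrand_left α i))

theorem tendsto_gradI {ι : Type*} {l : Filter ι} (hm : 0 < m)
    (hχ : MemLp (fun k => omega d m k ^ (1 / 2 - σ) * χ k) 2 volume)
    {q : ι → EuclideanSpace ℝ (Fin d)} {q₀ : EuclideanSpace ℝ (Fin d)}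
    {α : ι → EuclideanSpace ℝ (Fin d) → ℂ} {α₀ : EuclideanSpace ℝ (Fin d) → ℂ}
    (hα : ∀ x, MemLp (fun k => ((omega d m k ^ σ : ℝ) : ℂ) * α x k) 2 volume)
    (hα₀ : MemLp (fun k => ((omega d m k ^ σ : ℝ) : ℂ) * α₀ k) 2 volume)
    (hq : Tendsto q l (𝓝 q₀))
    (hαα₀ : Tendsto (fun x => (eLpNorm (fun k => ((omega d m k ^ σ : ℝ) : ℂ) *
      (α x k - α₀ k)) 2 volume).toReal) l (𝓝 0)) (i : Fin d) :
    Tendsto (fun x => gradI d m χ (q x) (α x) i) l (𝓝 (gradI d m χ q₀ α₀ i)) := by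
  have h_field : Tendsto (fun x => gradI d m χ (q x) (α x) i - gradI d m χ (q x) α₀ i) l (𝓝 0) :=
    squeeze_zero_norm (fun x => norm_gradI_sub_le hm hχ (hα x) hα₀ (q x) i)
      (by simpa using hαα₀.const_mul _)
  simpa using h_field.add (((continuous_gradI_left hm hχ hα₀ i).tendsto q₀).comp hq)

end GradI

theorem ContDiff.continuous_gradient {E : Type*} [NormedAddCommGroup E] [InnerProductSpace ℝ E]
    [CompleteSpace E] {g : E → ℝ} {n : WithTop ℕ∞} (hg : ContDiff ℝ n g) (hn : n ≠ 0) :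
    Continuous (gradient g) :=
  (InnerProductSpace.toDual ℝ E).symm.continuous.comp (hg.continuous_fderiv hn)

theorem contDiff_kineticEnergy {ι E : Type*} [NormedAddCommGroup E] [InnerProductSpace ℝ E]
    {n : WithTop ℕ∞} {M : ι → ℝ} (hM : ∀ j, M j ≠ 0) {f : ι → E → ℝ}
    (hf : (∀ j p, f j p = √(‖p‖ ^ 2 + M j ^ 2)) ∨ ∀ j p, f j p = ‖p‖ ^ 2 / (2 * M j))
    (j : ι) : ContDiff ℝ n (f j) := by
  rcases hf with hf | hf <;> rw [funext (hf j)]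
  · exact ((contDiff_norm_sq ℝ).add contDiff_const).sqrt fun p => by have := hM j; positivity
  · exact (contDiff_norm_sq ℝ).div_const _

section NLComponents

open Real

variable {d n : ℕ} {m σ : ℝ} {χ : EuclideanSpace ℝ (Fin d) → ℝ}
  {V : EuclideanSpace ℝ (Fin n × Fin d) → ℝ} {f : Fin n → EuclideanSpace ℝ (Fin d) → ℝ}
  {ι : Type*} {l : Filter ι} {u : ι → PhaseSpace d n} {u₀ : PhaseSpace d n}

theorem tendsto_NL_fst (hm : 0 < m)
    (hχ : MemLp (fun k => omega d m k ^ (1 / 2 - σ) * χ k) 2 volume)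
    (hV : Continuous (gradient V))
    (hu : ∀ x, MemLp (fun k => ((omega d m k ^ σ : ℝ) : ℂ) * (u x).2.2 k) 2 volume)
    (hu₀ : MemLp (fun k => ((omega d m k ^ σ : ℝ) : ℂ) * u₀.2.2 k) 2 volume)
    (hq : Tendsto (fun x => (u x).2.1) l (𝓝 u₀.2.1))
    (hα : Tendsto (fun x => (eLpNorm (fun k => ((omega d m k ^ σ : ℝ) : ℂ) *
      ((u x).2.2 k - u₀.2.2 k)) 2 volume).toReal) l (𝓝 0)) (j : Fin n) :
    Tendsto (fun x => (NL d n m χ V f (u x)).1 j) l (𝓝 ((NL d n m χ V f u₀).1 j)) := by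
  have hqj : Tendsto (fun x => qblock d n (u x).2.1 j) l (𝓝 (qblock d n u₀.2.1 j)) :=
    ((continuous_id.qblock j).tendsto _).comp hq
  refine ((PiLp.continuous_toLp 2 _).tendsto _).comp (tendsto_pi_nhds.2 fun i => ?_)
  exact ((((EuclideanSpace.proj (j, i)).continuous.tendsto _).comp
    ((hV.tendsto _).comp hq)).neg).sub
    ((Complex.continuous_re.tendsto _).comp (tendsto_gradI hm hχ hu hu₀ hqj hα i))

theorem tendsto_NL_snd_fst (hf : ∀ j, Continuous (gradient (f j)))
    (hp : ∀ j, Tendsto (fun x => (u x).1 j) l (𝓝 (u₀.1 j))) :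
    Tendsto (fun x => (NL d n m χ V f (u x)).2.1) l (𝓝 (NL d n m χ V f u₀).2.1) :=
  ((PiLp.continuous_toLp 2 _).tendsto _).comp (tendsto_pi_nhds.2 fun ji =>
    ((EuclideanSpace.proj ji.2).continuous.tendsto _).comp (((hf ji.1).tendsto _).comp (hp ji.1)))

theorem norm_omega_rpow_mul_NL_snd_snd_le (hm : 0 < m) (v : PhaseSpace d n)
    (k : EuclideanSpace ℝ (Fin d)) :
    ‖((omega d m k ^ σ : ℝ) : ℂ) * (NL d n m χ V f v).2.2 k‖ ≤
      n * ‖omega d m k ^ (σ - 1 / 2) * χ k‖ := by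
  have hω := omega_pos hm k
  have hterm : ∀ j, ‖((χ k / √(omega d m k) : ℝ) : ℂ) *
      Complex.exp (-(((phase d k (qblock d n v.2.1 j) : ℝ) : ℂ) * Complex.I))‖ =
      |χ k| / √(omega d m k) := by
    intro j
    rw [norm_mul, ← neg_mul, ← Complex.ofReal_neg, Complex.norm_exp_ofReal_mul_I, mul_one,
      Complex.norm_real, Real.norm_eq_abs, abs_div, abs_of_pos (Real.sqrt_pos.2 hω)]
  have hsum : ‖(NL d n m χ V f v).2.2 k‖ ≤ n * (|χ k| / √(omega d m k)) := by
    simp only [NL, norm_mul, norm_neg, Complex.norm_I, one_mul]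
    refine (norm_sum_le _ _).trans_eq ?_
    rw [Finset.sum_congr rfl fun j _ => hterm j]
    simp
  calc ‖((omega d m k ^ σ : ℝ) : ℂ) * (NL d n m χ V f v).2.2 k‖
      ≤ omega d m k ^ σ * (n * (|χ k| / √(omega d m k))) := by
        rw [norm_mul, Complex.norm_real, Real.norm_of_nonneg (Real.rpow_nonneg hω.le σ)]
        gcongr
    _ = n * ‖omega d m k ^ (σ - 1 / 2) * χ k‖ := by
        rw [norm_mul, Real.norm_eq_abs, Real.norm_eq_abs, abs_of_pos (Real.rpow_pos_of_pos hω _),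
          Real.rpow_sub hω, Real.sqrt_eq_rpow]
        ring

theorem aestronglyMeasurable_NL_snd_snd {μ : Measure (EuclideanSpace ℝ (Fin d))}
    (hχ : AEStronglyMeasurable χ μ) (v : PhaseSpace d n) :
    AEStronglyMeasurable (NL d n m χ V f v).2.2 μ := by
  have := aestronglyMeasurable_ofReal_div_sqrt_omega (m := m) hχ
  unfold NL
  fun_prop

theorem tendsto_NL_snd_snd_apply (hq : Tendsto (fun x => (u x).2.1) l (𝓝 u₀.2.1))
    (k : EuclideanSpace ℝ (Fin d)) :
    Tendsto (fun x => (NL d n m χ V f (u x)).2.2 k) l (𝓝 ((NL d n m χ V f u₀).2.2 k)) := by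
  -- the field component of `NL d n m χ V f v` depends on `v` only through `v.2.1`
  have hcont : Continuous fun q => (NL d n m χ V f (u₀.1, q, u₀.2.2)).2.2 k := by
    unfold NL
    fun_prop
  exact (hcont.tendsto _).comp hq

theorem tendsto_eLpNorm_NL_snd_snd {u : ℕ → PhaseSpace d n} (hm : 0 < m)
    (hχ : MemLp (fun k => omega d m k ^ (σ - 1 / 2) * χ k) 2 volume)
    (hq : Tendsto (fun ℓ => (u ℓ).2.1) atTop (𝓝 u₀.2.1)) :
    Tendsto (fun ℓ => (eLpNorm (fun k => ((omega d m k ^ σ : ℝ) : ℂ) *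
      ((NL d n m χ V f (u ℓ)).2.2 k - (NL d n m χ V f u₀).2.2 k)) 2 volume).toReal)
      atTop (𝓝 0) := by
  have hχ_meas : AEStronglyMeasurable χ volume :=
    (aestronglyMeasurable_omega_rpow_smul_iff hm _).1 hχ.1
  have hω_meas : AEStronglyMeasurable (fun k => ((omega d m k ^ σ : ℝ) : ℂ)) volume :=
    (Complex.continuous_ofReal.comp
      (continuous_omega.rpow_const fun k => .inl (omega_pos hm k).ne')).aestronglyMeasurable
  have h := tendsto_eLpNorm_sub_of_dominated two_ne_zero ofNat_ne_top
    (F := fun ℓ k => ((omega d m k ^ σ : ℝ) : ℂ) * (NL d n m χ V f (u ℓ)).2.2 k)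
    (f := fun k => ((omega d m k ^ σ : ℝ) : ℂ) * (NL d n m χ V f u₀).2.2 k)
    (fun ℓ => hω_meas.mul (aestronglyMeasurable_NL_snd_snd hχ_meas (u ℓ)))
    (hχ.norm.const_mul n) (fun ℓ => .of_forall (norm_omega_rpow_mul_NL_snd_snd_le hm (u ℓ)))
    (.of_forall fun k => (tendsto_NL_snd_snd_apply hq k).const_mul _)
  simpa only [mul_sub, Function.comp_def, ENNReal.toReal_zero] using
    (ENNReal.tendsto_toReal zero_ne_top).comp h

end NLComponents

section NormX

variable {d n : ℕ} {σ m : ℝ}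

theorem norm_fst_le_normX (v : PhaseSpace d n) (j : Fin n) : ‖v.1 j‖ ≤ normX d n σ m v := by
  refine Real.le_sqrt_of_sq_le ?_
  have := Finset.single_le_sum (fun j _ => sq_nonneg ‖v.1 j‖) (Finset.mem_univ j)
  nlinarith [sq_nonneg ‖v.2.1‖]

theorem norm_snd_fst_le_normX (v : PhaseSpace d n) : ‖v.2.1‖ ≤ normX d n σ m v := by
  refine Real.le_sqrt_of_sq_le ?_
  have := Finset.sum_nonneg fun j (_ : j ∈ Finset.univ) => sq_nonneg ‖v.1 j‖
  nlinarith

theorem eLpNorm_toReal_le_normX (v : PhaseSpace d n) :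
    (eLpNorm (fun k => ((omega d m k ^ σ : ℝ) : ℂ) * v.2.2 k) 2 volume).toReal ≤
      normX d n σ m v := by
  refine Real.le_sqrt_of_sq_le ?_
  have := Finset.sum_nonneg fun j (_ : j ∈ Finset.univ) => sq_nonneg ‖v.1 j‖
  nlinarith [sq_nonneg ‖v.2.1‖]

theorem normX_le (v : PhaseSpace d n) :
    normX d n σ m v ≤ ∑ j, ‖v.1 j‖ + ‖v.2.1‖ +
      (eLpNorm (fun k => ((omega d m k ^ σ : ℝ) : ℂ) * v.2.2 k) 2 volume).toReal := by
  unfold normX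
  set e := (eLpNorm (fun k => ((omega d m k ^ σ : ℝ) : ℂ) * v.2.2 k) 2 volume).toReal
  have hsum := Finset.sum_sq_le_sq_sum_of_nonneg fun j (_ : j ∈ Finset.univ) =>
    norm_nonneg (v.1 j)
  have := Finset.sum_nonneg fun j (_ : j ∈ Finset.univ) => norm_nonneg (v.1 j)
  refine Real.sqrt_le_iff.2 ⟨by positivity, ?_⟩
  nlinarith [norm_nonneg v.2.1, (ENNReal.toReal_nonneg : 0 ≤ e)]

theorem tendsto_normX_zero_iff {ι : Type*} {l : Filter ι} {v : ι → PhaseSpace d n} :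
    Tendsto (fun x => normX d n σ m (v x)) l (𝓝 0) ↔
      (∀ j, Tendsto (fun x => (v x).1 j) l (𝓝 0)) ∧ Tendsto (fun x => (v x).2.1) l (𝓝 0) ∧
        Tendsto (fun x => (eLpNorm (fun k => ((omega d m k ^ σ : ℝ) : ℂ) * (v x).2.2 k) 2
          volume).toReal) l (𝓝 0) := by
  constructor
  · intro h
    exact ⟨fun j => squeeze_zero_norm (fun x => norm_fst_le_normX (v x) j) h,
      squeeze_zero_norm (fun x => norm_snd_fst_le_normX (v x)) h,
      squeeze_zero (fun x => ENNReal.toReal_nonneg) (fun x => eLpNorm_toReal_le_normX (v x)) h⟩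
  · rintro ⟨hp, hq, hα⟩
    refine squeeze_zero (fun x => Real.sqrt_nonneg _) (fun x => normX_le (v x)) ?_
    simpa using ((tendsto_finsetSum _ fun j _ => (hp j).norm).add hq.norm).add hα

end NormX

theorem NL_continuous_general (d n : ℕ) (m σ : ℝ) (hm : 0 < m)
    (hσ : σ ∈ Set.Icc (1 / 2 : ℝ) 1)
    (χ : EuclideanSpace ℝ (Fin d) → ℝ)
    (hχ : MemLp (fun k => omega d m k ^ ((3 : ℝ) / 2 - σ) * χ k) 2 volume)
    (V : EuclideanSpace ℝ (Fin n × Fin d) → ℝ)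
    (hV : ContDiff ℝ 2 V)
    (M : Fin n → ℝ) (hM : ∀ j, 0 < M j)
    (f : Fin n → EuclideanSpace ℝ (Fin d) → ℝ)
    (hf : (∀ j p, f j p = Real.sqrt (‖p‖ ^ 2 + M j ^ 2)) ∨
          (∀ j p, f j p = ‖p‖ ^ 2 / (2 * M j)))
    (u : ℕ → PhaseSpace d n) (u₀ : PhaseSpace d n)
    (hu : ∀ ℓ, MemLp (fun k => ((omega d m k ^ σ : ℝ) : ℂ) * (u ℓ).2.2 k) 2 volume)
    (hu₀ : MemLp (fun k => ((omega d m k ^ σ : ℝ) : ℂ) * u₀.2.2 k) 2 volume)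
    (hconv : Tendsto (fun ℓ => normX d n σ m (u ℓ - u₀)) atTop (nhds 0)) :
    Tendsto (fun ℓ => normX d n σ m (NL d n m χ V f (u ℓ) - NL d n m χ V f u₀)) atTop
      (nhds 0) := by
  have hχ_gradI := memLp_omega_rpow_mul_of_le hm (s := 1 / 2 - σ) (by linarith) hχ
  have hχ_field := memLp_omega_rpow_mul_of_le hm (s := σ - 1 / 2) (by linarith [hσ.2]) hχ
  have hf_grad j :=
    (contDiff_kineticEnergy (n := 1) (fun j => (hM j).ne') hf j).continuous_gradient one_ne_zero
  obtain ⟨hp, hq, hα⟩ := tendsto_normX_zero_iff.1 hconv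
  simp only [Prod.fst_sub, Prod.snd_sub, Pi.sub_apply, tendsto_sub_nhds_zero_iff] at hp hq hα
  refine tendsto_normX_zero_iff.2 ⟨fun j => ?_, ?_, ?_⟩ <;>
    simp only [Prod.fst_sub, Prod.snd_sub, Pi.sub_apply, tendsto_sub_nhds_zero_iff]
  · exact tendsto_NL_fst hm hχ_gradI (hV.continuous_gradient two_ne_zero) hu hu₀ hq hα j
  · exact tendsto_NL_snd_fst hf_grad hp
  · exact tendsto_eLpNorm_NL_snd_snd hm hχ_field hq

/-- Under V ∈ C²_b and ω^{3/2−σ}χ ∈ L², σ ∈ [1/2,1], the nonlinearity 𝒩 : X^σ → X^σ is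
continuous: if u_ℓ → u in X^σ then 𝒩(u_ℓ) → 𝒩(u) in X^σ. -/
theorem NL_continuous (d n : ℕ) (m σ : ℝ) (hm : 0 < m)
    (hσ : σ ∈ Set.Icc (1 / 2 : ℝ) 1)
    (χ : EuclideanSpace ℝ (Fin d) → ℝ)
    (hχ : MemLp (fun k => omega d m k ^ ((3 : ℝ) / 2 - σ) * χ k) 2 volume)
    (V : EuclideanSpace ℝ (Fin n × Fin d) → ℝ)
    (hV : ContDiff ℝ 2 V)
    (hV1 : ∃ C, ∀ q, ‖gradient V q‖ ≤ C)
    (hV2 : ∃ C, ∀ q, ‖fderiv ℝ (fderiv ℝ V) q‖ ≤ C)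
    (M : Fin n → ℝ) (hM : ∀ j, 0 < M j)
    (f : Fin n → EuclideanSpace ℝ (Fin d) → ℝ)
    (hf : (∀ j p, f j p = Real.sqrt (‖p‖ ^ 2 + M j ^ 2)) ∨
          (∀ j p, f j p = ‖p‖ ^ 2 / (2 * M j)))
    (u : ℕ → PhaseSpace d n) (u₀ : PhaseSpace d n)
    (hu : ∀ ℓ, MemLp (fun k => ((omega d m k ^ σ : ℝ) : ℂ) * (u ℓ).2.2 k) 2 volume)
    (hu₀ : MemLp (fun k => ((omega d m k ^ σ : ℝ) : ℂ) * u₀.2.2 k) 2 volume)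
    (hconv : Tendsto (fun ℓ => normX d n σ m (u ℓ - u₀)) atTop (nhds 0)) :
    Tendsto (fun ℓ => normX d n σ m (NL d n m χ V f (u ℓ) - NL d n m χ V f u₀)) atTop
      (nhds 0) :=
  NL_continuous_general d n m σ hm hσ χ hχ V hV M hM f hf u u₀ hu hu₀ hconv
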